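/- For j ≥ 6 let ρ_j be the unique real solution in (0,1) of σ_j(z) = 1, where σ_j(z) = σ(z) - z^j/(1-z^j) and σ(z) = ∑_{ℓ≥1} (-1)^{ℓ-1} z^ℓ/(1-z^ℓ), and let ρ be the unique real solution of σ(z) = 1 in (0,1). Then, as j → ∞, ρ_j = ρ + ρ^j/σ'(ρ) + o(ρ^j); that is, (ρ_j - ρ - ρ^j/σ'(ρ))/ρ^j → 0 as j → ∞, where σ'(ρ) denotes the derivative of σ at ρ. -/

import Mathlib

open Filter

/-- `σ(z) = ∑_{ℓ≥1} (-1)^{ℓ-1} z^ℓ/(1-z^ℓ)` for real `z`. -/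
noncomputable def sigmaFn (z : ℝ) : ℝ :=
  ∑' ℓ : ℕ, (-1 : ℝ) ^ ℓ * z ^ (ℓ + 1) / (1 - z ^ (ℓ + 1))

/-- `σ_j(z) = σ(z) - z^j/(1-z^j)`. -/
noncomputable def sigmaJFn (j : ℕ) (z : ℝ) : ℝ :=
  sigmaFn z - z ^ j / (1 - z ^ j)

/-! Both `ρ` and `ρ_j` lie in `(0, 2/3]`: there the lower bound `σ z ≥ z/(1-z²)` of the
alternating series rules out larger roots, and the terms of the alternating series for `σ'`
decrease, so that `σ' ≥ 1`. Hence `|ρ_j - ρ| ≤ σ(ρ_j) - σ(ρ) = ρ_j^j/(1-ρ_j^j) =: t_j ≤ 2(2/3)^j`.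
In particular `j (ρ_j - ρ) → 0`, so `(ρ_j/ρ)^j → 1` and `t_j ~ ρ^j`. Differentiability of `σ`
at `ρ` now gives `σ'(ρ) (ρ_j - ρ) = t_j + o(ρ_j - ρ) = ρ^j + o(ρ^j)`. -/

open Set Asymptotics Topology

theorem HasDerivAt.isLittleO_sub_sub_div {α : Type*} {l : Filter α} {f : ℝ → ℝ} {f' x : ℝ}
    {r u : α → ℝ} (hf : HasDerivAt f f' x) (hf' : f' ≠ 0) (hr : Tendsto r l (𝓝 x))
    (hO : (fun i => r i - x) =O[l] u) (hu : (fun i => f (r i) - f x) ~[l] u) :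
    (fun i => r i - x - u i / f') =o[l] u := by
  have hlin : (fun i => f (r i) - f x - (r i - x) * f') =o[l] u :=
    ((hasDerivAt_iff_isLittleO.1 hf).comp_tendsto hr).trans_isBigO hO
  refine ((hu.isLittleO.sub hlin).const_mul_left f'⁻¹).congr_left fun i => ?_
  simp only [Pi.sub_apply]
  field_simp
  ring

theorem Antitone.sub_le_tsum_alternating {a : ℕ → ℝ} (ha : Antitone a) (hs : Summable a) :
    a 0 - a 1 ≤ ∑' n, (-1) ^ n * a n := by
  simpa [Finset.sum_range_succ, sub_eq_add_neg] using
    ha.alternating_series_le_tendsto hs.tendsto_alternating_series_tsum 1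

lemma tendsto_nat_mul_sub_of_abs_sub_le {r : ℕ → ℝ} {ρ C q : ℝ} (hq0 : 0 ≤ q) (hq1 : q < 1)
    (h : ∀ᶠ n in atTop, |r n - ρ| ≤ C * q ^ n) :
    Tendsto (fun n : ℕ => n * (r n - ρ)) atTop (𝓝 0) := by
  refine squeeze_zero_norm' ?_
    (by simpa using (tendsto_self_mul_const_pow_of_lt_one hq0 hq1).const_mul C)
  filter_upwards [h] with n hn
  rw [norm_mul, Real.norm_natCast, Real.norm_eq_abs, mul_left_comm]
  exact mul_le_mul_of_nonneg_left hn n.cast_nonneg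

lemma tendsto_div_pow_of_tendsto_nat_mul_sub {r : ℕ → ℝ} {ρ : ℝ} (hρ : ρ ≠ 0)
    (h : Tendsto (fun n : ℕ => n * (r n - ρ)) atTop (𝓝 0)) :
    Tendsto (fun n => (r n / ρ) ^ n) atTop (𝓝 1) := by
  have := Real.tendsto_one_add_pow_exp_of_tendsto (g := fun n => (r n - ρ) / ρ) (t := 0)
    (by simpa [mul_div_assoc] using h.div_const ρ)
  rw [Real.exp_zero] at this
  refine this.congr fun n => ?_
  rw [one_add_div hρ, add_sub_cancel]

lemma isEquivalent_pow_div_one_sub_pow {r : ℕ → ℝ} {ρ : ℝ} (hρ0 : 0 < ρ) (hρ1 : ρ < 1)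
    (h : Tendsto (fun n : ℕ => n * (r n - ρ)) atTop (𝓝 0)) :
    (fun n => r n ^ n / (1 - r n ^ n)) ~[atTop] fun n => ρ ^ n := by
  have hq := tendsto_div_pow_of_tendsto_nat_mul_sub hρ0.ne' h
  have hpow : Tendsto (fun n => ρ ^ n * (r n / ρ) ^ n) atTop (𝓝 0) := by
    simpa using (tendsto_pow_atTop_nhds_zero_of_lt_one hρ0.le hρ1).mul hq
  have hlim : Tendsto (fun n => (r n / ρ) ^ n / (1 - ρ ^ n * (r n / ρ) ^ n)) atTop (𝓝 1) := by
    have := hq.div (tendsto_const_nhds.sub hpow) (by norm_num : (1 : ℝ) - 0 ≠ 0)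
    rwa [sub_zero, div_one] at this
  refine isEquivalent_of_tendsto_one (hlim.congr fun n => ?_)
  rw [Pi.div_apply, ← mul_pow, mul_div_cancel₀ _ hρ0.ne', div_pow, div_div, div_div, mul_comm]

lemma pow_div_one_sub_pow_le_of_le {z : ℝ} (hz0 : 0 ≤ z) (hz1 : z < 1) {m n : ℕ} (hm : m ≠ 0)
    (hmn : m ≤ n) : z ^ n / (1 - z ^ n) ≤ z ^ m / (1 - z ^ m) := by
  have hzm : z ^ m < 1 := pow_lt_one₀ hz0 hz1 hm
  have hzn : z ^ n ≤ z ^ m := pow_le_pow_of_le_one hz0 hz1.le hmn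
  exact div_le_div₀ (pow_nonneg hz0 m) hzn (by linarith) (by linarith)

lemma pow_div_one_sub_pow_le_two_mul {e : ℝ} (he0 : 0 ≤ e) (he : e ≤ 2 / 3) {j : ℕ} (hj : 2 ≤ j) :
    e ^ j / (1 - e ^ j) ≤ 2 * (2 / 3) ^ j := by
  have hej : e ^ j ≤ (2 / 3) ^ j := pow_le_pow_left₀ he0 he j
  have hhalf : ((2 : ℝ) / 3) ^ j ≤ 1 / 2 :=
    (pow_le_pow_of_le_one (by norm_num) (by norm_num) hj).trans (by norm_num)
  rw [div_le_iff₀ (by linarith)]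
  nlinarith [pow_nonneg he0 j]

lemma summable_pow_succ_div_one_sub_pow_succ {z : ℝ} (hz0 : 0 ≤ z) (hz1 : z < 1) :
    Summable fun n : ℕ => z ^ (n + 1) / (1 - z ^ (n + 1)) := by
  refine Summable.of_nonneg_of_le (fun n => ?_) (fun n => ?_)
    ((summable_geometric_of_lt_one hz0 hz1).mul_left (z / (1 - z)))
  · exact div_nonneg (pow_nonneg hz0 _) (sub_nonneg.2 (pow_le_one₀ hz0 hz1.le))
  · calc z ^ (n + 1) / (1 - z ^ (n + 1)) ≤ z ^ (n + 1) / (1 - z) := by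
          gcongr
          exact pow_le_of_le_one hz0 hz1.le n.succ_ne_zero
      _ = z / (1 - z) * z ^ n := by ring

lemma sigmaFn_eq_tsum (z : ℝ) :
    sigmaFn z = ∑' n : ℕ, (-1) ^ n * (z ^ (n + 1) / (1 - z ^ (n + 1))) := by
  simp_rw [sigmaFn, mul_div_assoc]

lemma div_one_sub_sq_le_sigmaFn {z : ℝ} (hz0 : 0 ≤ z) (hz1 : z < 1) :
    z / (1 - z ^ 2) ≤ sigmaFn z := by
  have hanti : Antitone fun n : ℕ => z ^ (n + 1) / (1 - z ^ (n + 1)) :=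
    antitone_nat_of_succ_le fun n =>
      pow_div_one_sub_pow_le_of_le hz0 hz1 n.succ_ne_zero n.succ.le_succ
  have h := hanti.sub_le_tsum_alternating (summable_pow_succ_div_one_sub_pow_succ hz0 hz1)
  rw [sigmaFn_eq_tsum]
  convert h using 1
  have h1 : 1 - z ≠ 0 := by linarith
  have h2 : 1 - z ^ 2 ≠ 0 := by nlinarith
  simp only [zero_add, pow_one, Nat.reduceAdd]
  field_simp
  ring

lemma le_two_thirds_of_sigmaFn_le {z : ℝ} (hz0 : 0 ≤ z) (hz1 : z < 1)
    (h : sigmaFn z ≤ 1 + z ^ 6 / (1 - z ^ 6)) : z ≤ 2 / 3 := by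
  by_contra! hz
  have h6 : 0 < 1 - z ^ 6 := by linarith [pow_lt_one₀ hz0 hz1 (by norm_num : 6 ≠ 0)]
  have h2 : 1 - z ^ 2 ≠ 0 := by nlinarith
  have hσ := (div_one_sub_sq_le_sigmaFn hz0 hz1).trans h
  rw [show z / (1 - z ^ 2) = z * (1 + z ^ 2 + z ^ 4) / (1 - z ^ 6) by field_simp; ring,
    show 1 + z ^ 6 / (1 - z ^ 6) = 1 / (1 - z ^ 6) by field_simp; ring,
    div_le_div_iff_of_pos_right h6] at hσ
  nlinarith [pow_pos (by linarith : (0 : ℝ) < z) 3, pow_pos (by linarith : (0 : ℝ) < z) 4]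

lemma le_two_thirds_of_sigmaFn_eq_one {z : ℝ} (hz0 : 0 ≤ z) (hz1 : z < 1) (h : sigmaFn z = 1) :
    z ≤ 2 / 3 := by
  refine le_two_thirds_of_sigmaFn_le hz0 hz1 ?_
  rw [h, le_add_iff_nonneg_right]
  exact div_nonneg (pow_nonneg hz0 6) (sub_nonneg.2 (pow_le_one₀ hz0 hz1.le))

lemma le_two_thirds_of_sigmaJFn_eq_one {j : ℕ} (hj : 6 ≤ j) {z : ℝ} (hz0 : 0 ≤ z) (hz1 : z < 1)
    (h : sigmaJFn j z = 1) : z ≤ 2 / 3 := by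
  refine le_two_thirds_of_sigmaFn_le hz0 hz1 ?_
  have := pow_div_one_sub_pow_le_of_le hz0 hz1 (by norm_num) hj
  rw [sigmaJFn] at h
  linarith

noncomputable def sigmaDeriv (z : ℝ) : ℝ :=
  ∑' n : ℕ, (-1) ^ n * ((n + 1) * z ^ n / (1 - z ^ (n + 1)) ^ 2)

lemma hasDerivAt_sigmaFn_term (n : ℕ) {y : ℝ} (hy : y ^ (n + 1) ≠ 1) :
    HasDerivAt (fun z : ℝ => (-1) ^ n * z ^ (n + 1) / (1 - z ^ (n + 1)))
      ((-1) ^ n * ((n + 1) * y ^ n / (1 - y ^ (n + 1)) ^ 2)) y := by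
  have hpow := hasDerivAt_pow (n + 1) y
  refine ((hpow.const_mul ((-1) ^ n)).div (hpow.const_sub 1)
    (sub_ne_zero.2 hy.symm)).congr_deriv ?_
  simp only [add_tsub_cancel_right, Nat.cast_add, Nat.cast_one]
  ring

lemma sigmaDeriv_term_le {q y : ℝ} (hy0 : 0 ≤ y) (hyq : y ≤ q) (hq1 : q < 1) (n : ℕ) :
    (n + 1) * y ^ n / (1 - y ^ (n + 1)) ^ 2 ≤ (n + 1) * q ^ n / (1 - q) ^ 2 := by
  have hq0 : 0 ≤ q := hy0.trans hyq
  have : y ^ (n + 1) ≤ q := (pow_le_of_le_one hy0 (hyq.trans hq1.le) n.succ_ne_zero).trans hyq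
  gcongr

lemma summable_sigmaDeriv_bound {q : ℝ} (hq0 : 0 ≤ q) (hq1 : q < 1) :
    Summable fun n : ℕ => (n + 1) * q ^ n / (1 - q) ^ 2 := by
  have hn : Summable fun n : ℕ => (n : ℝ) * q ^ n :=
    (hasSum_coe_mul_geometric_of_norm_lt_one (by rwa [Real.norm_of_nonneg hq0])).summable
  simp_rw [add_mul, one_mul]
  exact (hn.add (summable_geometric_of_lt_one hq0 hq1)).div_const _

lemma hasDerivAt_sigmaFn {z : ℝ} (hz0 : 0 < z) (hz1 : z < 1) :
    HasDerivAt sigmaFn (sigmaDeriv z) z := by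
  obtain ⟨q, hzq, hq1⟩ := exists_between hz1
  have hz : z ∈ Ioo 0 q := ⟨hz0, hzq⟩
  refine hasDerivAt_tsum_of_isPreconnected (summable_sigmaDeriv_bound (hz0.trans hzq).le hq1)
    isOpen_Ioo isPreconnected_Ioo
    (fun n y hy => hasDerivAt_sigmaFn_term n
      (pow_lt_one₀ hy.1.le (hy.2.trans hq1) n.succ_ne_zero).ne)
    (fun n y hy => ?_) hz ?_ hz
  · rw [norm_mul, norm_pow, norm_neg, norm_one, one_pow, one_mul, Real.norm_of_nonneg
      (div_nonneg (mul_nonneg (by positivity) (pow_nonneg hy.1.le n)) (sq_nonneg _))]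
    exact sigmaDeriv_term_le hy.1.le hy.2.le hq1 n
  · simpa only [mul_div_assoc] using (summable_pow_succ_div_one_sub_pow_succ hz0.le hz1).alternating

lemma sigmaDeriv_term_antitone {z : ℝ} (hz0 : 0 ≤ z) (hz : z ≤ 2 / 3) :
    Antitone fun n : ℕ => (n + 1) * z ^ n / (1 - z ^ (n + 1)) ^ 2 := by
  refine antitone_nat_of_succ_le fun n => ?_
  have hz1 : z < 1 := by linarith
  rcases n with _ | n
  · have h1 : 0 < 1 - z := by linarith
    have h2 : 0 < 1 - z ^ 2 := by nlinarith
    simp only [Nat.cast_zero, zero_add, pow_zero, pow_one, Nat.reduceAdd, Nat.cast_one]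
    rw [div_le_div_iff₀ (pow_pos h2 2) (pow_pos h1 2)]
    nlinarith [sq_nonneg z, mul_pos h1 h1]
  · have hden : 0 < 1 - z ^ (n + 2) := by linarith [pow_lt_one₀ hz0 hz1 (by omega : n + 2 ≠ 0)]
    have hden' : 1 - z ^ (n + 2) ≤ 1 - z ^ (n + 3) := by
      linarith [pow_le_pow_of_le_one hz0 hz1.le (by omega : n + 2 ≤ n + 3)]
    have hnum : ((n + 2 : ℕ) + 1) * z ^ (n + 2) ≤ ((n + 1 : ℕ) + 1) * z ^ (n + 1) := by
      rw [pow_succ, ← mul_assoc]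
      push_cast
      have key : ((n : ℝ) + 2 + 1) * z ≤ n + 1 + 1 := by nlinarith [(n.cast_nonneg : (0 : ℝ) ≤ n)]
      nlinarith [mul_le_mul_of_nonneg_right key (pow_nonneg hz0 (n + 1))]
    calc ((n + 2 : ℕ) + 1) * z ^ (n + 2) / (1 - z ^ (n + 3)) ^ 2
        ≤ ((n + 2 : ℕ) + 1) * z ^ (n + 2) / (1 - z ^ (n + 2)) ^ 2 :=
          div_le_div_of_nonneg_left (by positivity) (pow_pos hden 2)
            (pow_le_pow_left₀ hden.le hden' 2)
      _ ≤ ((n + 1 : ℕ) + 1) * z ^ (n + 1) / (1 - z ^ (n + 2)) ^ 2 :=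
          div_le_div_of_nonneg_right hnum (sq_nonneg _)

lemma one_le_sigmaDeriv {z : ℝ} (hz0 : 0 < z) (hz : z ≤ 2 / 3) : 1 ≤ sigmaDeriv z := by
  have hz1 : z < 1 := by linarith
  have hsum : Summable fun n : ℕ => (n + 1) * z ^ n / (1 - z ^ (n + 1)) ^ 2 :=
    (summable_sigmaDeriv_bound hz0.le hz1).of_nonneg_of_le (fun n => by positivity)
      (sigmaDeriv_term_le hz0.le le_rfl hz1)
  refine le_trans ?_ ((sigmaDeriv_term_antitone hz0.le hz).sub_le_tsum_alternating hsum)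
  have h1 : 0 < 1 - z := by linarith
  have h2 : 0 < 1 - z ^ 2 := by nlinarith
  simp only [Nat.cast_zero, zero_add, pow_zero, pow_one, Nat.reduceAdd, Nat.cast_one, one_mul]
  rw [div_sub_div _ _ (by positivity) (by positivity), le_div_iff₀ (by positivity)]
  nlinarith [sq_nonneg (1 - z ^ 2), sq_nonneg z, sq_nonneg (z * (1 - z)), sq_nonneg (1 - z)]

lemma abs_sub_le_abs_sigmaFn_sub {x y : ℝ} (hx : x ∈ Ioc 0 (2 / 3)) (hy : y ∈ Ioc 0 (2 / 3)) :
    |x - y| ≤ |sigmaFn x - sigmaFn y| := by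
  have hD : ∀ z ∈ Ioc (0 : ℝ) (2 / 3), HasDerivAt sigmaFn (sigmaDeriv z) z := fun z hz =>
    hasDerivAt_sigmaFn hz.1 (by linarith [hz.2])
  have hgrowth := (convex_Ioc (0 : ℝ) (2 / 3)).mul_sub_le_image_sub_of_le_deriv
    (fun z hz => (hD z hz).continuousAt.continuousWithinAt)
    (fun z hz => (hD z (interior_subset hz)).differentiableAt.differentiableWithinAt)
    (C := 1) fun z hz => by
      rw [interior_Ioc] at hz
      rw [(hD z (Ioo_subset_Ioc_self hz)).deriv]
      exact one_le_sigmaDeriv hz.1 hz.2.le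
  rcases le_total x y with hxy | hyx
  · rw [abs_sub_comm, abs_sub_comm (sigmaFn x), abs_of_nonneg (sub_nonneg.2 hxy)]
    simpa using (hgrowth x hx y hy hxy).trans (le_abs_self _)
  · rw [abs_of_nonneg (sub_nonneg.2 hyx)]
    simpa using (hgrowth y hy x hx hyx).trans (le_abs_self _)

lemma abs_sub_le_of_sigmaJFn_eq_one {j : ℕ} (hj : 6 ≤ j) {ρ e : ℝ} (hρ : ρ ∈ Ioc 0 (2 / 3))
    (hσρ : sigmaFn ρ = 1) (he : e ∈ Ioo 0 1) (hσe : sigmaJFn j e = 1) :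
    |e - ρ| ≤ e ^ j / (1 - e ^ j) := by
  have he' : e ∈ Ioc 0 (2 / 3) := ⟨he.1, le_two_thirds_of_sigmaJFn_eq_one hj he.1.le he.2 hσe⟩
  have hpos : 0 ≤ e ^ j / (1 - e ^ j) :=
    div_nonneg (pow_nonneg he.1.le j) (sub_nonneg.2 (pow_le_one₀ he.1.le he.2.le))
  rw [sigmaJFn] at hσe
  calc |e - ρ| ≤ |sigmaFn e - sigmaFn ρ| := abs_sub_le_abs_sigmaFn_sub he' hρ
    _ = e ^ j / (1 - e ^ j) := by rw [hσρ, show sigmaFn e - 1 = e ^ j / (1 - e ^ j) by linarith,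
      abs_of_nonneg hpos]

theorem rho_j_asymptotics_general (ρ : ℝ)
    (hρ : ρ ∈ Set.Ioo (0 : ℝ) 1 ∧ sigmaFn ρ = 1)
    (r : ℕ → ℝ)
    (hr : ∀ j, 6 ≤ j → r j ∈ Set.Ioo (0 : ℝ) 1 ∧ sigmaJFn j (r j) = 1) :
    Tendsto (fun j : ℕ => (r j - ρ - ρ ^ j / deriv sigmaFn ρ) / ρ ^ j)
      atTop (nhds 0) := by
  obtain ⟨⟨hρ0, hρ1⟩, hσρ⟩ := hρ
  have hρ23 : ρ ≤ 2 / 3 := le_two_thirds_of_sigmaFn_eq_one hρ0.le hρ1 hσρ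
  set t : ℕ → ℝ := fun j => r j ^ j / (1 - r j ^ j)
  have hclose : ∀ᶠ j in atTop, sigmaFn (r j) - sigmaFn ρ = t j ∧ |r j - ρ| ≤ t j ∧
      t j ≤ 2 * (2 / 3) ^ j := by
    filter_upwards [eventually_ge_atTop 6] with j hj
    obtain ⟨hrj, hσr⟩ := hr j hj
    refine ⟨by rw [sigmaJFn] at hσr; linarith,
      abs_sub_le_of_sigmaJFn_eq_one hj ⟨hρ0, hρ23⟩ hσρ hrj hσr,
      pow_div_one_sub_pow_le_two_mul hrj.1.le
        (le_two_thirds_of_sigmaJFn_eq_one hj hrj.1.le hrj.2 hσr) (by omega)⟩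
  have ht : t ~[atTop] fun j => ρ ^ j := isEquivalent_pow_div_one_sub_pow hρ0 hρ1 <|
    tendsto_nat_mul_sub_of_abs_sub_le (by norm_num) (by norm_num)
      (hclose.mono fun j h => h.2.1.trans h.2.2)
  have hO : (fun j => r j - ρ) =O[atTop] fun j => ρ ^ j :=
    (IsBigO.of_bound' (hclose.mono fun j h => h.2.1.trans (le_abs_self _))).trans ht.isBigO
  have hrρ : Tendsto r atTop (𝓝 ρ) := tendsto_sub_nhds_zero_iff.1 <|
    hO.trans_tendsto (tendsto_pow_atTop_nhds_zero_of_lt_one hρ0.le hρ1)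
  have hD := hasDerivAt_sigmaFn hρ0 hρ1
  rw [hD.deriv]
  exact (hD.isLittleO_sub_sub_div (by linarith [one_le_sigmaDeriv hρ0 hρ23]) hrρ hO
    (ht.congr_left (hclose.mono fun j h => h.1.symm))).tendsto_div_nhds_zero

/-- With `ρ` the unique solution of `σ(z) = 1` in `(0,1)` and `ρ_j = r j` the
unique solution of `σ_j(z) = 1` in `(0,1)` for `j ≥ 6`, one has
`ρ_j = ρ + ρ^j/σ'(ρ) + o(ρ^j)` as `j → ∞`. -/
theorem rho_j_asymptotics (ρ : ℝ)
    (hρ : ρ ∈ Set.Ioo (0 : ℝ) 1 ∧ sigmaFn ρ = 1)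
    (hρu : ∀ x ∈ Set.Ioo (0 : ℝ) 1, sigmaFn x = 1 → x = ρ)
    (r : ℕ → ℝ)
    (hr : ∀ j, 6 ≤ j → r j ∈ Set.Ioo (0 : ℝ) 1 ∧ sigmaJFn j (r j) = 1)
    (hru : ∀ j, 6 ≤ j → ∀ x ∈ Set.Ioo (0 : ℝ) 1, sigmaJFn j x = 1 → x = r j) :
    Tendsto (fun j : ℕ => (r j - ρ - ρ ^ j / deriv sigmaFn ρ) / ρ ^ j)
      atTop (nhds 0) :=
  rho_j_asymptotics_general ρ hρ r hr
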